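/- Let λ : [0,T] → (0,∞) be measurable and define G₂₂(t₁,t₂) = {(x₁,x₂) : λ(x₁) ≤ min(λ(t₁),λ(t₂)), 0 ≤ x₁ ≤ T, 0 ≤ x₂ ≤ λ(x₁)}. Then G₂₂(t₁,t₂) = G₂₂(t₁,T') ∩ G₂₂(t₂,T') where T' is any point with λ(T') = max λ (assuming the max is attained), and consequently, for bounded nonnegative measurable σ², the kernel K₂₂(t₁,t₂) = ∫_{G₂₂(t₁,t₂)} σ²(x) dx is symmetric and positive semidefinite. -/
import Mathlib


open MeasureTheory

/-- The covariance domain of the intensity-ordered partial-sum process: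
`G₂₂(t₁,t₂) = {(x₁,x₂) : λ(x₁) ≤ min(λ(t₁),λ(t₂)), 0 ≤ x₁ ≤ T, 0 ≤ x₂ ≤ λ(x₁)}`. -/
def G22 (T : ℝ) (l : ℝ → ℝ) (t₁ t₂ : ℝ) : Set (ℝ × ℝ) :=
  {p : ℝ × ℝ | l p.1 ≤ min (l t₁) (l t₂) ∧ 0 ≤ p.1 ∧ p.1 ≤ T ∧ 0 ≤ p.2 ∧ p.2 ≤ l p.1}

lemma G22_measurableSet (T : ℝ) (l : ℝ → ℝ) (hlmeas : Measurable l) (t₁ t₂ : ℝ) :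
    MeasurableSet (G22 T l t₁ t₂) := by
  have h1 : Measurable fun p : ℝ × ℝ => l p.1 := hlmeas.comp measurable_fst
  have : G22 T l t₁ t₂ = {p : ℝ × ℝ | l p.1 ≤ min (l t₁) (l t₂)} ∩ {p | 0 ≤ p.1}
      ∩ {p | p.1 ≤ T} ∩ {p | 0 ≤ p.2} ∩ {p | p.2 ≤ l p.1} := by
    ext p; simp [G22]; tauto
  rw [this]
  exact ((((measurableSet_le h1 measurable_const).inter
      (measurableSet_le measurable_const measurable_fst)).inter
      (measurableSet_le measurable_fst measurable_const)).inter
      (measurableSet_le measurable_const measurable_snd)).inter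
      (measurableSet_le measurable_snd h1)

lemma G22_subset_box (T : ℝ) (l : ℝ → ℝ) (T' : ℝ) (hmax : ∀ t ∈ Set.Icc 0 T, l t ≤ l T')
    (t₁ t₂ : ℝ) : G22 T l t₁ t₂ ⊆ Set.Icc ((0 : ℝ), (0 : ℝ)) (T, l T') := by
  rintro p ⟨-, h1, h2, h3, h4⟩
  refine Set.mem_Icc.2 ⟨⟨h1, h3⟩, h2, h4.trans (hmax p.1 ⟨h1, h2⟩)⟩

/-- If the maximum of `λ` on `[0,T]` is attained at `T'`, then
`G₂₂(t₁,t₂) = G₂₂(t₁,T') ∩ G₂₂(t₂,T')` for `t₁, t₂ ∈ [0,T]`, and consequently the kernel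
`K₂₂(t₁,t₂) = ∫_{G₂₂(t₁,t₂)} σ²(x) dx` is symmetric and positive semidefinite. -/
theorem kernel_G22_symm_posSemidef (T : ℝ) (hT : 0 < T)
    (l : ℝ → ℝ) (hlmeas : Measurable l) (hlpos : ∀ t ∈ Set.Icc 0 T, 0 < l t)
    (T' : ℝ) (hT' : T' ∈ Set.Icc 0 T) (hmax : ∀ t ∈ Set.Icc 0 T, l t ≤ l T')
    (σ2 : ℝ × ℝ → ℝ) (hσ2meas : Measurable σ2) (hσ2nonneg : ∀ p, 0 ≤ σ2 p)
    (Cσ : ℝ) (hσ2bdd : ∀ p, σ2 p ≤ Cσ) :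
    (∀ t₁ ∈ Set.Icc 0 T, ∀ t₂ ∈ Set.Icc 0 T,
      G22 T l t₁ t₂ = G22 T l t₁ T' ∩ G22 T l t₂ T') ∧
    (∀ t₁ t₂ : ℝ,
      (∫ p in G22 T l t₁ t₂, σ2 p ∂volume) = ∫ p in G22 T l t₂ t₁, σ2 p ∂volume) ∧
    (∀ (n : ℕ) (s : Fin n → ℝ), (∀ i, s i ∈ Set.Icc 0 T) → ∀ a : Fin n → ℝ,
      0 ≤ ∑ i, ∑ j, a i * a j * ∫ p in G22 T l (s i) (s j), σ2 p ∂volume) := by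
  -- finite volume of sets
  have hvol : ∀ t₁ t₂ : ℝ, volume (G22 T l t₁ t₂) < ⊤ := by
    intro t₁ t₂
    exact lt_of_le_of_lt (measure_mono (G22_subset_box T l T' hmax t₁ t₂))
      isCompact_Icc.measure_lt_top
  -- integrability on G22 sets
  have hint : ∀ t₁ t₂ : ℝ, IntegrableOn σ2 (G22 T l t₁ t₂) volume := by
    intro t₁ t₂
    refine Measure.integrableOn_of_bounded (M := Cσ) (hvol t₁ t₂).ne hσ2meas.aestronglyMeasurable ?_
    filter_upwards with x
    rw [Real.norm_of_nonneg (hσ2nonneg x)]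
    exact hσ2bdd x
  -- Part 1: intersection structure
  have part1 : ∀ t₁ ∈ Set.Icc (0:ℝ) T, ∀ t₂ ∈ Set.Icc (0:ℝ) T,
      G22 T l t₁ t₂ = G22 T l t₁ T' ∩ G22 T l t₂ T' := by
    intro t₁ ht₁ t₂ ht₂
    ext p
    simp only [G22, Set.mem_setOf_eq, Set.mem_inter_iff, le_min_iff]
    constructor
    · rintro ⟨⟨ha, hb⟩, h⟩
      have hx : p.1 ∈ Set.Icc (0:ℝ) T := ⟨h.1, h.2.1⟩
      exact ⟨⟨⟨ha, hmax p.1 hx⟩, h⟩, ⟨hb, hmax p.1 hx⟩, h⟩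
    · rintro ⟨⟨⟨ha, -⟩, h⟩, ⟨hb, -⟩, -⟩
      exact ⟨⟨ha, hb⟩, h⟩
  refine ⟨part1, ?_, ?_⟩
  · intro t₁ t₂
    have : G22 T l t₁ t₂ = G22 T l t₂ t₁ := by
      ext p; simp [G22, min_comm (l t₁) (l t₂)]
    rw [this]
  · intro n s hs a
    set G : Fin n → Set (ℝ × ℝ) := fun i => G22 T l (s i) T' with hG
    have hGm : ∀ i, MeasurableSet (G i) := fun i => G22_measurableSet T l hlmeas _ _
    set f : Fin n → ℝ × ℝ → ℝ := fun i p => a i * Set.indicator (G i) (fun _ => (1:ℝ)) p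
      with hf
    -- each product term is integrable
    have hterm : ∀ i j, Integrable (fun p => f i p * f j p * σ2 p) volume := by
      intro i j
      have heq : (fun p => f i p * f j p * σ2 p)
          = fun p => (a i * a j) * Set.indicator (G i ∩ G j) σ2 p := by
        funext p
        simp only [hf, Set.indicator]
        by_cases h1 : p ∈ G i <;> by_cases h2 : p ∈ G j <;>
          simp [h1, h2, Set.mem_inter_iff] <;> ring
      rw [heq]
      have hij : IntegrableOn σ2 (G i ∩ G j) volume :=
        (hint (s i) T').mono_set Set.inter_subset_left
      exact (hij.integrable_indicator ((hGm i).inter (hGm j))).const_mul _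
    -- rewrite each kernel entry
    have hentry : ∀ i j, a i * a j * (∫ p in G22 T l (s i) (s j), σ2 p ∂volume)
        = ∫ p, f i p * f j p * σ2 p ∂volume := by
      intro i j
      rw [part1 (s i) (hs i) (s j) (hs j)]
      rw [← integral_indicator ((hGm i).inter (hGm j))]
      rw [← integral_const_mul]
      congr 1
      funext p
      simp only [hf, Set.indicator]
      by_cases h1 : p ∈ G i <;> by_cases h2 : p ∈ G j <;>
        simp [h1, h2, Set.mem_inter_iff] <;> ring
    calc (0:ℝ) ≤ ∫ p, (∑ i, f i p) ^ 2 * σ2 p ∂volume := by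
          apply integral_nonneg
          intro p
          exact mul_nonneg (sq_nonneg _) (hσ2nonneg p)
      _ = ∑ i, ∑ j, a i * a j * ∫ p in G22 T l (s i) (s j), σ2 p ∂volume := by
          have : ∀ p : ℝ × ℝ, (∑ i, f i p) ^ 2 * σ2 p
              = ∑ i, ∑ j, f i p * f j p * σ2 p := by
            intro p
            rw [sq, Finset.sum_mul_sum, Finset.sum_mul]
            congr 1; funext i
            rw [Finset.sum_mul]
          simp_rw [this]
          rw [integral_finset_sum _ (fun i _ => integrable_finset_sum _
            (fun j _ => hterm i j))]
          refine Finset.sum_congr rfl fun i _ => ?_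
          rw [integral_finset_sum _ (fun j _ => hterm i j)]
          exact Finset.sum_congr rfl fun j _ => (hentry i j).symm
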